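/- Let ς = (xₙ) be a (future or past) chain in a weakly distinguishing chronological set X and let X̄ be a completion of X. If (P,F) ∈ X̄ is an endpoint of ς, then (P,F) ∈ L(ρ') (limit operator computed in the chronological set (X̄, ≪̄)) for every subsequence ρ' of the sequence ρ = (i(xₙ)) in X̄. In particular, i[X] is topologically dense in X̄ for the chronological topology. -/
import Mathlib


namespace CausalBoundary

variable {X : Type*}

/-- The past of a set of points: `I⁻[S]`. -/
def pastOf (r : X → X → Prop) (S : Set X) : Set X := {x | ∃ s ∈ S, r x s}

/-- The future of a set of points: `I⁺[S]`. -/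
def futureOf (r : X → X → Prop) (S : Set X) : Set X := {x | ∃ s ∈ S, r s x}

/-- The past of a point: `I⁻(x)`. -/
def pastPt (r : X → X → Prop) (x : X) : Set X := {y | r y x}

/-- The future of a point: `I⁺(x)`. -/
def futPt (r : X → X → Prop) (x : X) : Set X := {y | r x y}

/-- A past set: `P = I⁻[P]`. -/
def IsPastSet (r : X → X → Prop) (P : Set X) : Prop := P = pastOf r P

/-- A future set: `F = I⁺[F]`. -/
def IsFutureSet (r : X → X → Prop) (F : Set X) : Prop := F = futureOf r F

/-- An indecomposable past set (IP): a nonempty past set which is not the union of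
two proper subsets which are both past sets. -/
def IsIP (r : X → X → Prop) (P : Set X) : Prop :=
  IsPastSet r P ∧ P.Nonempty ∧
    ¬ ∃ P₁ P₂ : Set X, IsPastSet r P₁ ∧ IsPastSet r P₂ ∧ P₁ ⊂ P ∧ P₂ ⊂ P ∧ P = P₁ ∪ P₂

/-- An indecomposable future set (IF). -/
def IsIF (r : X → X → Prop) (F : Set X) : Prop :=
  IsFutureSet r F ∧ F.Nonempty ∧
    ¬ ∃ F₁ F₂ : Set X, IsFutureSet r F₁ ∧ IsFutureSet r F₂ ∧ F₁ ⊂ F ∧ F₂ ⊂ F ∧ F = F₁ ∪ F₂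

/-- `dec(P)`: the set of all maximal IPs (under inclusion) contained in `P`. -/
def decP (r : X → X → Prop) (P : Set X) : Set (Set X) :=
  {Q | IsIP r Q ∧ Q ⊆ P ∧ ∀ Q' : Set X, IsIP r Q' → Q' ⊆ P → Q ⊆ Q' → Q = Q'}

/-- `dec(F)` for future sets: the set of all maximal IFs contained in `F`. -/
def decF (r : X → X → Prop) (F : Set X) : Set (Set X) :=
  {Q | IsIF r Q ∧ Q ⊆ F ∧ ∀ Q' : Set X, IsIF r Q' → Q' ⊆ F → Q ⊆ Q' → Q = Q'}

/-- Inferior limit of a sequence of sets: `LI(Aₙ) = ∪ₙ ∩_{k ≥ n} A_k`. -/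
def seqLI (A : ℕ → Set X) : Set X := ⋃ n, ⋂ k, ⋂ (_ : n ≤ k), A k

/-- Superior limit of a sequence of sets: `LS(Aₙ) = ∩ₙ ∪_{k ≥ n} A_k`. -/
def seqLS (A : ℕ → Set X) : Set X := ⋂ n, ⋃ k, ⋃ (_ : n ≤ k), A k

/-- The limit operator `L̂`: `P ∈ L̂(σ)` iff `P` is an IP with `P ⊆ LI(I⁻(σₙ))` and
`P` is a maximal IP within `LS(I⁻(σₙ))`. -/
def Lhat (r : X → X → Prop) (σ : ℕ → X) : Set (Set X) :=
  {P | IsIP r P ∧ P ⊆ seqLI (fun n => pastPt r (σ n)) ∧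
    P ⊆ seqLS (fun n => pastPt r (σ n)) ∧
    ∀ P' : Set X, IsIP r P' → P' ⊆ seqLS (fun n => pastPt r (σ n)) → P ⊆ P' → P = P'}

/-- The limit operator `Ľ`, dual to `L̂`. -/
def Lcheck (r : X → X → Prop) (σ : ℕ → X) : Set (Set X) :=
  {F | IsIF r F ∧ F ⊆ seqLI (fun n => futPt r (σ n)) ∧
    F ⊆ seqLS (fun n => futPt r (σ n)) ∧
    ∀ F' : Set X, IsIF r F' → F' ⊆ seqLS (fun n => futPt r (σ n)) → F ⊆ F' → F = F'}

/-- The limit operator `L`: `x ∈ L(σ)` iff `dec(I⁻(x)) ⊆ L̂(σ)` and `dec(I⁺(x)) ⊆ Ľ(σ)`. -/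
def limitOp (r : X → X → Prop) (σ : ℕ → X) : Set X :=
  {x | decP r (pastPt r x) ⊆ Lhat r σ ∧ decF r (futPt r x) ⊆ Lcheck r σ}

/-- A future chain: a sequence with `xₙ ≪ xₙ₊₁`. -/
def IsFutureChain (r : X → X → Prop) (c : ℕ → X) : Prop := ∀ n, r (c n) (c (n + 1))

/-- A past chain: a sequence with `xₙ₊₁ ≪ xₙ`. -/
def IsPastChain (r : X → X → Prop) (c : ℕ → X) : Prop := ∀ n, r (c (n + 1)) (c n)

/-- A (future or past) chain. -/
def IsChronChain (r : X → X → Prop) (c : ℕ → X) : Prop :=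
  IsFutureChain r c ∨ IsPastChain r c

/-- `(X, r)` is a chronological set: `r` is transitive and irreflexive, there are no
isolates, and there is a countable dense subset. -/
def IsChronSet (r : X → X → Prop) : Prop :=
  Transitive r ∧ Irreflexive r ∧ (∀ x : X, ∃ y : X, r x y ∨ r y x) ∧
    ∃ D : Set X, D.Countable ∧ ∀ x y : X, r x y → ∃ d ∈ D, r x d ∧ r d y

/-- Weakly distinguishing: points with the same past and future coincide. -/
def WeaklyDist (r : X → X → Prop) : Prop :=
  ∀ x y : X, pastPt r x = pastPt r y → futPt r x = futPt r y → x = y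

/-- The natural injection `i(x) = (I⁻(x), I⁺(x))` into `X_p × X_f`. -/
def inj (r : X → X → Prop) (x : X) : Set X × Set X := (pastPt r x, futPt r x)

/-- `(P, F) ∈ X_p × X_f` is an endpoint of a future chain `c` if `P = I⁻[c]` and
`dec(F) ⊆ Ľ(c)`; of a past chain if `F = I⁺[c]` and `dec(P) ⊆ L̂(c)`. -/
def IsEndpoint (r : X → X → Prop) (c : ℕ → X) (p : Set X × Set X) : Prop :=
  IsPastSet r p.1 ∧ IsFutureSet r p.2 ∧
    ((IsFutureChain r c ∧ p.1 = pastOf r (Set.range c) ∧ decF r p.2 ⊆ Lcheck r c) ∨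
     (IsPastChain r c ∧ p.2 = futureOf r (Set.range c) ∧ decP r p.1 ⊆ Lhat r c))

/-- `X^end`: the union of `i[X]` with all endpoints of all chains in `X`. -/
def endSet (r : X → X → Prop) : Set (Set X × Set X) :=
  Set.range (inj r) ∪ {p | ∃ c : ℕ → X, IsChronChain r c ∧ IsEndpoint r c p}

/-- A completion of `X`: a set `X̄` with `i[X] ⊆ X̄ ⊆ X^end` such that every chain
in `X` has some endpoint in `X̄`. -/
def IsCompletion (r : X → X → Prop) (Xb : Set (Set X × Set X)) : Prop :=
  Set.range (inj r) ⊆ Xb ∧ Xb ⊆ endSet r ∧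
    ∀ c : ℕ → X, IsChronChain r c → ∃ p ∈ Xb, IsEndpoint r c p

/-- The chronology on pairs: `(P,F) ≪̄ (P',F')` iff `F ∩ P' ≠ ∅`. -/
def llbar (p q : Set X × Set X) : Prop := (p.2 ∩ q.1).Nonempty

/-- The chronology `≪̄` on a completion, viewed on the subtype. -/
def subRel (Xb : Set (Set X × Set X)) (a b : ↥Xb) : Prop := llbar a.1 b.1

/-- The injection of `X` into a completion `X̄` (as a subtype). -/
def iota (r : X → X → Prop) (Xb : Set (Set X × Set X))
    (h : Set.range (inj r) ⊆ Xb) (x : X) : ↥Xb := ⟨inj r x, h ⟨x, rfl⟩⟩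


/-- A set is closed for the chronological topology iff it is stable under the limit
operator `L`. -/
def IsChrClosed (r : X → X → Prop) (C : Set X) : Prop :=
  ∀ σ : ℕ → X, (∀ n, σ n ∈ C) → limitOp r σ ⊆ C

/-- The chronological topology: its closed sets are the sets stable under `L`. -/
def chrTop (r : X → X → Prop) : TopologicalSpace X :=
  TopologicalSpace.generateFrom {U : Set X | IsChrClosed r Uᶜ}

end CausalBoundary

open CausalBoundary

section CBProof

open CausalBoundary

variable {Y : Type*} {r : Y → Y → Prop}

/-- Betweenness property. -/
def Betw (r : Y → Y → Prop) : Prop := ∀ ⦃x y⦄, r x y → ∃ d, r x d ∧ r d y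

/-- Past-directedness (for IFs). -/
def Codir (r : Y → Y → Prop) (F : Set Y) : Prop :=
  ∀ x ∈ F, ∀ y ∈ F, ∃ z ∈ F, r z x ∧ r z y

lemma futureOf_isFutureSet (htr : Transitive r) (hbt : Betw r) (S : Set Y) :
    IsFutureSet r (futureOf r S) := by
  apply Set.Subset.antisymm
  · rintro x ⟨s, hs, hsx⟩
    obtain ⟨d, h1, h2⟩ := hbt hsx
    exact ⟨d, ⟨s, hs, h1⟩, h2⟩
  · rintro x ⟨t, ⟨s, hs, hst⟩, htx⟩
    exact ⟨s, hs, htr hst htx⟩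

lemma fs_up {F : Set Y} (hF : IsFutureSet r F) {u v : Y} (hu : u ∈ F) (huv : r u v) : v ∈ F := by
  rw [hF]; exact ⟨u, hu, huv⟩

lemma fs_down {F : Set Y} (hF : IsFutureSet r F) {u : Y} (hu : u ∈ F) : ∃ s ∈ F, r s u := by
  rw [hF] at hu; exact hu

lemma ps_down {P : Set Y} (hP : IsPastSet r P) {u v : Y} (hu : u ∈ P) (hvu : r v u) : v ∈ P := by
  rw [hP]; exact ⟨u, hu, hvu⟩

lemma ps_up {P : Set Y} (hP : IsPastSet r P) {u : Y} (hu : u ∈ P) : ∃ t ∈ P, r u t := by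
  rw [hP] at hu; exact hu

lemma codir_isIF {F : Set Y} (hF : IsFutureSet r F) (hne : F.Nonempty)
    (hcd : Codir r F) : IsIF r F := by
  refine ⟨hF, hne, ?_⟩
  rintro ⟨F₁, F₂, h1, h2, hs1, hs2, heq⟩
  obtain ⟨x, hxF, hxn⟩ := Set.exists_of_ssubset hs1
  obtain ⟨y, hyF, hyn⟩ := Set.exists_of_ssubset hs2
  obtain ⟨z, hzF, hzx, hzy⟩ := hcd x hxF y hyF
  have : z ∈ F₁ ∪ F₂ := heq ▸ hzF
  rcases this with hz | hz
  · exact hxn (fs_up h1 hz hzx)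
  · exact hyn (fs_up h2 hz hzy)

lemma isIF_codir (htr : Transitive r) (hbt : Betw r) {F : Set Y} (hF : IsIF r F) :
    Codir r F := by
  intro x hx y hy
  by_contra hno
  push_neg at hno
  apply hF.2.2
  refine ⟨futureOf r {s | s ∈ F ∧ r s x}, futureOf r {s | s ∈ F ∧ ¬ r s x},
    futureOf_isFutureSet htr hbt _, futureOf_isFutureSet htr hbt _, ?_, ?_, ?_⟩
  · rw [Set.ssubset_def]
    constructor
    · rintro u ⟨s, ⟨hsF, _⟩, hsu⟩; exact fs_up hF.1 hsF hsu
    · intro hsub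
      obtain ⟨s, ⟨hsF, hsx⟩, hsy⟩ := hsub hy
      exact hno s hsF hsx hsy
  · rw [Set.ssubset_def]
    constructor
    · rintro u ⟨s, ⟨hsF, _⟩, hsu⟩; exact fs_up hF.1 hsF hsu
    · intro hsub
      obtain ⟨s, ⟨_, hsnx⟩, hsx⟩ := hsub hx
      exact hsnx hsx
  · apply Set.Subset.antisymm
    · intro u hu
      obtain ⟨s, hsF, hsu⟩ := fs_down hF.1 hu
      by_cases hsx : r s x
      · exact Or.inl ⟨s, ⟨hsF, hsx⟩, hsu⟩
      · exact Or.inr ⟨s, ⟨hsF, hsx⟩, hsu⟩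
    · rintro u (⟨s, ⟨hsF, _⟩, hsu⟩ | ⟨s, ⟨hsF, _⟩, hsu⟩) <;> exact fs_up hF.1 hsF hsu

lemma exists_IF_of_mem (htr : Transitive r) (hbt : Betw r) {F : Set Y}
    (hF : IsFutureSet r F) {x : Y} (hx : x ∈ F) :
    ∃ G, IsIF r G ∧ G ⊆ F ∧ x ∈ G := by
  obtain ⟨z, hzF, hzx⟩ := fs_down hF hx
  let step : {y // r z y} → {y // r z y} :=
    fun p => ⟨Classical.choose (hbt p.2), (Classical.choose_spec (hbt p.2)).1⟩
  have hstep : ∀ p : {y // r z y}, r (step p).1 p.1 :=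
    fun p => (Classical.choose_spec (hbt p.2)).2
  let e : ℕ → {y // r z y} := fun n => step^[n + 1] ⟨x, hzx⟩
  let d : ℕ → Y := fun n => (e n).1
  have hd1 : ∀ n, r z (d n) := fun n => (e n).2
  have hd2 : ∀ n, r (d (n + 1)) (d n) := by
    intro n
    have he : e (n + 1) = step (e n) := Function.iterate_succ_apply' step (n + 1) ⟨x, hzx⟩
    show r (e (n + 1)).1 (e n).1
    rw [he]
    exact hstep (e n)
  have hd0 : r (d 0) x := by
    have he : e 0 = step ⟨x, hzx⟩ := by
      show step^[0 + 1] ⟨x, hzx⟩ = _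
      rw [Function.iterate_succ_apply', Function.iterate_zero_apply]
    show r (e 0).1 x
    rw [he]
    exact hstep ⟨x, hzx⟩
  have hlt : ∀ i k, i < k → r (d k) (d i) := by
    intro i k hik
    induction hik with
    | refl => exact hd2 i
    | step _ ih => exact htr (hd2 _) ih
  refine ⟨futureOf r (Set.range d), ?_, ?_, ⟨d 0, ⟨0, rfl⟩, hd0⟩⟩
  · refine codir_isIF (futureOf_isFutureSet htr hbt _) ⟨x, ⟨d 0, ⟨0, rfl⟩, hd0⟩⟩ ?_
    rintro u ⟨s, ⟨n, rfl⟩, hnu⟩ v ⟨t, ⟨m, rfl⟩, hmv⟩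
    refine ⟨d (n ⊔ m + 1), ⟨d (n ⊔ m + 2), ⟨n ⊔ m + 2, rfl⟩, hd2 _⟩, ?_, ?_⟩
    · exact htr (hlt n _ (Nat.lt_succ_of_le (le_max_left n m))) hnu
    · exact htr (hlt m _ (Nat.lt_succ_of_le (le_max_right n m))) hmv
  · rintro u ⟨s, ⟨n, rfl⟩, hnu⟩
    exact fs_up hF (fs_up hF hzF (hd1 n)) hnu

lemma exists_max_IF (htr : Transitive r) (hbt : Betw r) {F G : Set Y}
    (hG : IsIF r G) (hGF : G ⊆ F) : ∃ M ∈ decF r F, G ⊆ M := by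
  have hZ : ∀ ch ⊆ {H : Set Y | IsIF r H ∧ H ⊆ F}, IsChain (· ⊆ ·) ch → ch.Nonempty →
      ∃ ub ∈ {H : Set Y | IsIF r H ∧ H ⊆ F}, ∀ s ∈ ch, s ⊆ ub := by
    intro ch hchS hchain hchne
    refine ⟨⋃₀ ch, ⟨?_, ?_⟩, fun s hs => Set.subset_sUnion_of_mem hs⟩
    · have hfs : IsFutureSet r (⋃₀ ch) := by
        apply Set.Subset.antisymm
        · rintro u ⟨H, hHc, huH⟩
          obtain ⟨s, hsH, hsu⟩ := fs_down (hchS hHc).1.1 huH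
          exact ⟨s, ⟨H, hHc, hsH⟩, hsu⟩
        · rintro u ⟨s, ⟨H, hHc, hsH⟩, hsu⟩
          exact ⟨H, hHc, fs_up (hchS hHc).1.1 hsH hsu⟩
      refine codir_isIF hfs ?_ ?_
      · obtain ⟨H, hH⟩ := hchne
        obtain ⟨u, hu⟩ := (hchS hH).1.2.1
        exact ⟨u, H, hH, hu⟩
      · rintro x ⟨H₁, hH₁, hx⟩ y ⟨H₂, hH₂, hy⟩
        rcases hchain.total hH₁ hH₂ with hsub | hsub
        · obtain ⟨z, hz, h1, h2⟩ := isIF_codir htr hbt (hchS hH₂).1 x (hsub hx) y hy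
          exact ⟨z, ⟨H₂, hH₂, hz⟩, h1, h2⟩
        · obtain ⟨z, hz, h1, h2⟩ := isIF_codir htr hbt (hchS hH₁).1 x hx y (hsub hy)
          exact ⟨z, ⟨H₁, hH₁, hz⟩, h1, h2⟩
    · exact Set.sUnion_subset fun H hH => (hchS hH).2
  obtain ⟨M, hGM, hM⟩ := zorn_subset_nonempty {H : Set Y | IsIF r H ∧ H ⊆ F} hZ G ⟨hG, hGF⟩
  refine ⟨M, ⟨hM.1.1, hM.1.2, ?_⟩, hGM⟩
  intro Q' h1 h2 h3
  exact Set.Subset.antisymm h3 (hM.2 ⟨h1, h2⟩ h3)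

lemma mem_decF_of_mem (htr : Transitive r) (hbt : Betw r) {F : Set Y}
    (hF : IsFutureSet r F) {x : Y} (hx : x ∈ F) : ∃ M ∈ decF r F, x ∈ M := by
  obtain ⟨G, hG, hGF, hxG⟩ := exists_IF_of_mem htr hbt hF hx
  obtain ⟨M, hM, hGM⟩ := exists_max_IF htr hbt hG hGF
  exact ⟨M, hM, hGM hxG⟩

lemma chain_lt (htr : Transitive r) {c : ℕ → Y} (hcc : IsFutureChain r c) :
    ∀ i j, i < j → r (c i) (c j) := by
  intro i j hij
  induction hij with
  | refl => exact hcc i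
  | step _ ih => exact htr ih (hcc _)

lemma bound_of_decF (htr : Transitive r) (hbt : Betw r) {c : ℕ → Y}
    (hcc : IsFutureChain r c) {F : Set Y} (hF : IsFutureSet r F)
    (hd : decF r F ⊆ Lcheck r c) : ∀ v ∈ F, ∀ n, r (c n) v := by
  intro v hv n
  obtain ⟨M, hM, hvM⟩ := mem_decF_of_mem htr hbt hF hv
  have hLI := (hd hM).2.1 hvM
  simp only [seqLI, Set.mem_iUnion, Set.mem_iInter] at hLI
  obtain ⟨n₀, hk⟩ := hLI
  rcases lt_or_ge n n₀ with hlt | hle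
  · exact htr (chain_lt htr hcc n n₀ hlt) (hk n₀ le_rfl)
  · exact hk n hle

section Abstract

variable {α : Type*} (R : α → α → Prop) (pa fu : α → Set Y)

lemma easyLemma
    (hR : ∀ a b, R a b ↔ (fu a ∩ pa b).Nonempty)
    (htr : Transitive r) {c : ℕ → Y} (hcc : IsFutureChain r c)
    {φ : ℕ → ℕ} (hφ : StrictMono φ)
    {σ : ℕ → α} (hσp : ∀ n, pa (σ n) = pastPt r (c (φ n)))
    {p : α} (hp : pa p = pastOf r (Set.range c)) :
    decP R (pastPt R p) ⊆ Lhat R σ := by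
  have hcle : ∀ y m k, m ≤ k → r y (c m) → r y (c k) := by
    intro y m k hmk hy
    rcases eq_or_lt_of_le hmk with rfl | hlt
    · exact hy
    · exact htr hy (chain_lt htr hcc m k hlt)
  have key : ∀ a, a ∈ pastPt R p ↔ ∃ n, R a (σ n) := by
    intro a
    constructor
    · intro ha
      obtain ⟨y, hyf, hyp⟩ := (hR a p).1 ha
      rw [hp] at hyp
      obtain ⟨s, ⟨m, rfl⟩, hys⟩ := hyp
      refine ⟨m, (hR a (σ m)).2 ⟨y, hyf, ?_⟩⟩
      rw [hσp]
      exact hcle y m (φ m) (hφ.le_apply) hys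
    · rintro ⟨n, hn⟩
      obtain ⟨y, hyf, hyp⟩ := (hR a (σ n)).1 hn
      rw [hσp] at hyp
      refine (hR a p).2 ⟨y, hyf, ?_⟩
      rw [hp]
      exact ⟨c (φ n), ⟨φ n, rfl⟩, hyp⟩
  have mono : ∀ m k, m ≤ k → pastPt R (σ m) ⊆ pastPt R (σ k) := by
    intro m k hmk a ha
    obtain ⟨y, hyf, hyp⟩ := (hR a (σ m)).1 ha
    rw [hσp] at hyp
    refine (hR a (σ k)).2 ⟨y, hyf, ?_⟩
    rw [hσp]
    exact hcle y (φ m) (φ k) (hφ.monotone hmk) hyp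
  have hLI : seqLI (fun n => pastPt R (σ n)) = pastPt R p := by
    ext a
    simp only [seqLI, Set.mem_iUnion, Set.mem_iInter]
    constructor
    · rintro ⟨n₀, hk⟩
      exact (key a).2 ⟨n₀, hk n₀ le_rfl⟩
    · intro ha
      obtain ⟨n, hn⟩ := (key a).1 ha
      exact ⟨n, fun k hk => mono n k hk hn⟩
  have hLS : seqLS (fun n => pastPt R (σ n)) = pastPt R p := by
    ext a
    simp only [seqLS, Set.mem_iInter, Set.mem_iUnion]
    constructor
    · intro hs
      obtain ⟨k, _, hk⟩ := hs 0
      exact (key a).2 ⟨k, hk⟩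
    · intro ha m
      obtain ⟨n, hn⟩ := (key a).1 ha
      exact ⟨n ⊔ m, le_max_right n m, mono n (n ⊔ m) (le_max_left n m) hn⟩
  rintro Q ⟨hQIP, hQsub, hQmax⟩
  refine ⟨hQIP, ?_, ?_, ?_⟩
  · rw [hLI]; exact hQsub
  · rw [hLS]; exact hQsub
  · intro Q' h1 h2 h3
    rw [hLS] at h2
    exact hQmax Q' h1 h2 h3

lemma hardLemma
    (hR : ∀ a b, R a b ↔ (fu a ∩ pa b).Nonempty)
    (hpa : ∀ a, IsPastSet r (pa a)) (hfu : ∀ a, IsFutureSet r (fu a))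
    (hT : ∀ a, ∀ u ∈ pa a, ∀ v ∈ fu a, r u v)
    (hrep : ∀ x : Y, ∃ a, pa a = pastPt r x ∧ fu a = futPt r x)
    (htr : Transitive r) (hbt : Betw r)
    {c : ℕ → Y} (hcc : IsFutureChain r c)
    {φ : ℕ → ℕ} (hφ : StrictMono φ)
    {σ : ℕ → α} (hσp : ∀ n, pa (σ n) = pastPt r (c (φ n)))
    (hσf : ∀ n, fu (σ n) = futPt r (c (φ n)))
    {p : α} (hdec : decF r (fu p) ⊆ Lcheck r c) :
    decF R (futPt R p) ⊆ Lcheck R σ := by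
  have hRtr : Transitive R := by
    intro a b e hab hbe
    obtain ⟨u, huf, hup⟩ := (hR a b).1 hab
    obtain ⟨v, hvf, hvp⟩ := (hR b e).1 hbe
    exact (hR a e).2 ⟨u, huf, ps_down (hpa e) hvp (hT b u hup v hvf)⟩
  have hRbt : Betw R := by
    intro a b hab
    obtain ⟨u, huf, hup⟩ := (hR a b).1 hab
    obtain ⟨s, hsf, hsu⟩ := fs_down (hfu a) huf
    obtain ⟨d, hd1, hd2⟩ := hrep u
    obtain ⟨t, htp, hut⟩ := ps_up (hpa b) hup
    refine ⟨d, (hR a d).2 ⟨s, hsf, ?_⟩, (hR d b).2 ⟨t, ?_, htp⟩⟩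
    · rw [hd1]; exact hsu
    · rw [hd2]; exact hut
  rintro Q ⟨hQIF, hQsub, hQmax⟩
  have hQfs : IsFutureSet R Q := hQIF.1
  have hQcd : Codir R Q := isIF_codir hRtr hRbt hQIF
  -- the union of futures of elements of an IF of the completion is an IF of Y
  have mkIF : ∀ Q' : Set α, IsIF R Q' →
      IsIF r (⋃ a ∈ Q', fu a) ∧ (∀ a ∈ Q', ∀ t ∈ fu a, t ∈ ⋃ a ∈ Q', fu a) := by
    intro Q' hQ'
    have hfs : IsFutureSet r (⋃ a ∈ Q', fu a) := by
      apply Set.Subset.antisymm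
      · intro u hu
        simp only [Set.mem_iUnion] at hu
        obtain ⟨a, ha, hua⟩ := hu
        obtain ⟨s, hs, hsu⟩ := fs_down (hfu a) hua
        exact ⟨s, by simp only [Set.mem_iUnion]; exact ⟨a, ha, hs⟩, hsu⟩
      · rintro u ⟨s, hs, hsu⟩
        simp only [Set.mem_iUnion] at hs ⊢
        obtain ⟨a, ha, hsa⟩ := hs
        exact ⟨a, ha, fs_up (hfu a) hsa hsu⟩
    have hmem : ∀ a ∈ Q', ∀ t ∈ fu a, t ∈ ⋃ a ∈ Q', fu a := by
      intro a ha t ht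
      simp only [Set.mem_iUnion]
      exact ⟨a, ha, ht⟩
    refine ⟨codir_isIF hfs ?_ ?_, hmem⟩
    · obtain ⟨a, ha⟩ := hQ'.2.1
      obtain ⟨w, hw, hRwa⟩ := fs_down hQ'.1 ha
      obtain ⟨u, huf, _⟩ := (hR w a).1 hRwa
      exact ⟨u, hmem w hw u huf⟩
    · intro t ht t' ht'
      simp only [Set.mem_iUnion] at ht ht'
      obtain ⟨w, hw, htw⟩ := ht
      obtain ⟨w', hw', htw'⟩ := ht'
      obtain ⟨x, hx, hRxw, hRxw'⟩ := (isIF_codir hRtr hRbt hQ') w hw w' hw'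
      obtain ⟨a, haf, hap⟩ := (hR x w).1 hRxw
      obtain ⟨a', haf', hap'⟩ := (hR x w').1 hRxw'
      obtain ⟨y, hy, hRyx⟩ := fs_down hQ'.1 hx
      obtain ⟨b, hbf, hbp⟩ := (hR y x).1 hRyx
      refine ⟨b, hmem y hy b hbf, ?_, ?_⟩
      · exact htr (hT x b hbp a haf) (hT w a hap t htw)
      · exact htr (hT x b hbp a' haf') (hT w' a' hap' t' htw')
  -- H_Q
  obtain ⟨hHQIF, hHQmem⟩ := mkIF Q hQIF
  have hHQF : (⋃ a ∈ Q, fu a) ⊆ fu p := by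
    intro t ht
    simp only [Set.mem_iUnion] at ht
    obtain ⟨w, hw, htw⟩ := ht
    obtain ⟨x, hx, hRxw⟩ := fs_down hQfs hw
    have hRpx : R p x := hQsub hx
    obtain ⟨z, hzf, hzp⟩ := (hR p x).1 hRpx
    obtain ⟨b, hbf, hbp⟩ := (hR x w).1 hRxw
    exact fs_up (hfu p) (fs_up (hfu p) hzf (hT x z hzp b hbf)) (hT w b hbp t htw)
  obtain ⟨G, hGdec, hHQG⟩ := exists_max_IF htr hbt hHQIF hHQF
  obtain ⟨hGIF, hGLI, hGLS, hGmax⟩ := hdec hGdec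
  have hGall : ∀ z ∈ G, ∀ n, r (c n) z := by
    intro z hz n
    have := hGLI hz
    simp only [seqLI, Set.mem_iUnion, Set.mem_iInter] at this
    obtain ⟨n₀, hk⟩ := this
    rcases lt_or_ge n n₀ with hlt | hle
    · exact htr (chain_lt htr hcc n n₀ hlt) (hk n₀ le_rfl)
    · exact hk n hle
  -- the IF J of the completion generated by G
  have hGF : G ⊆ fu p := hGdec.2.1
  set J : Set α := {a | (G ∩ pa a).Nonempty} with hJdef
  have hJup : ∀ a b, a ∈ J → R a b → b ∈ J := by
    rintro a b ⟨z, hzG, hzpa⟩ hab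
    obtain ⟨u, huf, hup⟩ := (hR a b).1 hab
    exact ⟨u, fs_up hGIF.1 hzG (hT a z hzpa u huf), hup⟩
  have hJfs : IsFutureSet R J := by
    apply Set.Subset.antisymm
    · rintro a ⟨z, hzG, hzpa⟩
      obtain ⟨z', hz'G, hz'z⟩ := fs_down hGIF.1 hzG
      obtain ⟨d, hd1, hd2⟩ := hrep z
      obtain ⟨t, htp, hzt⟩ := ps_up (hpa a) hzpa
      refine ⟨d, ⟨z', hz'G, ?_⟩, (hR d a).2 ⟨t, ?_, htp⟩⟩
      · rw [hd1]; exact hz'z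
      · rw [hd2]; exact hzt
    · rintro a ⟨w, hw, hwa⟩
      exact hJup w a hw hwa
  have hJcd : Codir R J := by
    rintro a ⟨za, hzaG, hzapa⟩ b ⟨zb, hzbG, hzbpa⟩
    obtain ⟨g, hgG, hga, hgb⟩ := isIF_codir htr hbt hGIF za hzaG zb hzbG
    obtain ⟨g', hg'G, hg'g⟩ := fs_down hGIF.1 hgG
    obtain ⟨d, hd1, hd2⟩ := hrep g
    refine ⟨d, ⟨g', hg'G, ?_⟩, (hR d a).2 ⟨za, ?_, hzapa⟩, (hR d b).2 ⟨zb, ?_, hzbpa⟩⟩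
    · rw [hd1]; exact hg'g
    · rw [hd2]; exact hga
    · rw [hd2]; exact hgb
  have hQJ : Q ⊆ J := by
    intro a ha
    obtain ⟨w, hw, hRwa⟩ := fs_down hQfs ha
    obtain ⟨u, huf, hup⟩ := (hR w a).1 hRwa
    exact ⟨u, hHQG (hHQmem w hw u huf), hup⟩
  have hJIF : IsIF R J := codir_isIF hJfs (hQIF.2.1.mono hQJ) hJcd
  have hJsub : J ⊆ futPt R p := by
    rintro a ⟨z, hzG, hzpa⟩
    exact (hR p a).2 ⟨z, hGF hzG, hzpa⟩
  have hQeqJ : Q = J := hQmax J hJIF hJsub hQJ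
  refine ⟨hQIF, ?_, ?_, ?_⟩
  · intro a ha
    have haJ : a ∈ J := hQeqJ ▸ ha
    obtain ⟨z, hzG, hzpa⟩ := haJ
    simp only [seqLI, Set.mem_iUnion, Set.mem_iInter]
    exact ⟨0, fun k _ => (hR (σ k) a).2 ⟨z, by rw [hσf]; exact hGall z hzG (φ k), hzpa⟩⟩
  · intro a ha
    have haJ : a ∈ J := hQeqJ ▸ ha
    obtain ⟨z, hzG, hzpa⟩ := haJ
    simp only [seqLS, Set.mem_iInter, Set.mem_iUnion]
    exact fun n => ⟨n, le_rfl, (hR (σ n) a).2 ⟨z, by rw [hσf]; exact hGall z hzG (φ n), hzpa⟩⟩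
  · intro Q' hQ'IF hQ'LS hQQ'
    obtain ⟨hH0IF, hH0mem⟩ := mkIF Q' hQ'IF
    have hH0LS : (⋃ a ∈ Q', fu a) ⊆ seqLS (fun n => futPt r (c n)) := by
      intro t ht
      simp only [Set.mem_iUnion] at ht
      obtain ⟨w, hw, htw⟩ := ht
      have hall : ∀ m, r (c m) t := by
        intro m
        have := hQ'LS hw
        simp only [seqLS, Set.mem_iInter, Set.mem_iUnion] at this
        obtain ⟨k, hmk, hRk⟩ := this (m + 1)
        obtain ⟨v, hvf, hvp⟩ := (hR (σ k) w).1 hRk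
        rw [hσf] at hvf
        have h1 : r (c m) (c (φ k)) :=
          chain_lt htr hcc m (φ k) (lt_of_lt_of_le (Nat.lt_of_succ_le hmk) hφ.le_apply)
        exact htr h1 (htr hvf (hT w v hvp t htw))
      simp only [seqLS, Set.mem_iInter, Set.mem_iUnion]
      exact fun n => ⟨n, le_rfl, hall n⟩
    have hGH0 : G ⊆ ⋃ a ∈ Q', fu a := by
      intro g hg
      obtain ⟨g', hg'G, hg'g⟩ := fs_down hGIF.1 hg
      obtain ⟨d, hd1, hd2⟩ := hrep g
      have hdJ : d ∈ J := ⟨g', hg'G, by rw [hd1]; exact hg'g⟩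
      have hdQ' : d ∈ Q' := hQQ' (hQeqJ ▸ hdJ)
      obtain ⟨w, hw, hRwd⟩ := fs_down hQ'IF.1 hdQ'
      obtain ⟨u, huf, hup⟩ := (hR w d).1 hRwd
      rw [hd1] at hup
      exact fs_up (hH0IF.1) (hH0mem w hw u huf) hup
    have hGeq : G = ⋃ a ∈ Q', fu a := hGmax _ hH0IF hH0LS hGH0
    have hQ'sub : Q' ⊆ futPt R p := by
      intro a ha
      obtain ⟨w, hw, hRwa⟩ := fs_down hQ'IF.1 ha
      obtain ⟨u, huf, hup⟩ := (hR w a).1 hRwa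
      have huG : u ∈ G := hGeq ▸ hH0mem w hw u huf
      exact (hR p a).2 ⟨u, hGF huG, hup⟩
    exact hQmax Q' hQ'IF hQ'sub hQQ'

end Abstract

lemma pastPt_isPastSet {Y : Type*} {r : Y → Y → Prop} (htr : Transitive r) (hbt : Betw r)
    (x : Y) : IsPastSet r (pastPt r x) := by
  apply Set.Subset.antisymm
  · intro y hy
    obtain ⟨d, h1, h2⟩ := hbt hy
    exact ⟨d, h2, h1⟩
  · rintro y ⟨s, hsx, hys⟩
    exact htr hys hsx

lemma futPt_isFutureSet {Y : Type*} {r : Y → Y → Prop} (htr : Transitive r) (hbt : Betw r)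
    (x : Y) : IsFutureSet r (futPt r x) := by
  apply Set.Subset.antisymm
  · intro y hy
    obtain ⟨d, h1, h2⟩ := hbt hy
    exact ⟨d, h1, h2⟩
  · rintro y ⟨s, hxs, hsy⟩
    exact htr hxs hsy

lemma endSet_props {Y : Type*} {r : Y → Y → Prop} (htr : Transitive r) (hbt : Betw r)
    {q : Set Y × Set Y} (hq : q ∈ endSet r) :
    IsPastSet r q.1 ∧ IsFutureSet r q.2 ∧ ∀ u ∈ q.1, ∀ v ∈ q.2, r u v := by
  have htr' : Transitive (flip r) := fun a b e h1 h2 => htr h2 h1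
  have hbt' : Betw (flip r) := by
    intro x y hxy
    obtain ⟨d, h1, h2⟩ := hbt hxy
    exact ⟨d, h2, h1⟩
  rcases hq with ⟨x, rfl⟩ | ⟨c, _, hPS, hFS, hdisj⟩
  · exact ⟨pastPt_isPastSet htr hbt x, futPt_isFutureSet htr hbt x,
      fun u hu v hv => htr hu hv⟩
  · refine ⟨hPS, hFS, ?_⟩
    intro u hu v hv
    rcases hdisj with ⟨hfc, hq1, hq2⟩ | ⟨hpc, hq2, hq1d⟩
    · rw [hq1] at hu
      obtain ⟨s, ⟨m, rfl⟩, hus⟩ := hu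
      exact htr hus (bound_of_decF htr hbt hfc hFS hq2 v hv m)
    · rw [hq2] at hv
      obtain ⟨s, ⟨m, rfl⟩, hsv⟩ := hv
      have hb : ∀ w ∈ q.1, ∀ n, flip r (c n) w :=
        bound_of_decF (r := flip r) htr' hbt' hpc hPS hq1d
      exact htr (hb u hu m) hsv

lemma limit_of_endpoint {X : Type*} (r : X → X → Prop) (h : IsChronSet r)
    (Xb : Set (Set X × Set X)) (hc : IsCompletion r Xb)
    (c : ℕ → X) (P F : Set X) (hmem : (P, F) ∈ Xb)
    (hend : IsEndpoint r c (P, F)) (φ : ℕ → ℕ) (hφ : StrictMono φ) :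
    (⟨(P, F), hmem⟩ : ↥Xb) ∈ limitOp (subRel Xb) (fun n => iota r Xb hc.1 (c (φ n))) := by
  obtain ⟨htr, hirr, hni, D, hDc, hDd⟩ := h
  have hbt : Betw r := by
    intro x y hxy
    obtain ⟨d, _, h1, h2⟩ := hDd x y hxy
    exact ⟨d, h1, h2⟩
  have hprops : ∀ a : ↥Xb,
      IsPastSet r a.1.1 ∧ IsFutureSet r a.1.2 ∧ ∀ u ∈ a.1.1, ∀ v ∈ a.1.2, r u v :=
    fun a => endSet_props htr hbt (hc.2.1 a.2)
  have hRflip : ∀ a b : ↥Xb, flip (subRel Xb) a b ↔ (a.1.1 ∩ b.1.2).Nonempty := by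
    intro a b
    show (b.1.2 ∩ a.1.1).Nonempty ↔ (a.1.1 ∩ b.1.2).Nonempty
    rw [Set.inter_comm]
  have htr' : Transitive (flip r) := fun a b e h1 h2 => htr h2 h1
  have hbt' : Betw (flip r) := by
    intro x y hxy
    obtain ⟨d, h1, h2⟩ := hbt hxy
    exact ⟨d, h2, h1⟩
  refine ⟨?_, ?_⟩
  · rcases hend.2.2 with ⟨hfc, hPeq, _⟩ | ⟨hpc, hFeq, hdecP⟩
    · exact easyLemma (R := subRel Xb) (pa := fun a => a.1.1) (fu := fun a => a.1.2)
        (fun a b => Iff.rfl) htr hfc hφ (fun n => rfl) hPeq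
    · exact hardLemma (r := flip r) (R := flip (subRel Xb)) (pa := fun a => a.1.2)
        (fu := fun a => a.1.1) hRflip
        (fun a => (hprops a).2.1) (fun a => (hprops a).1)
        (fun a u hu v hv => (hprops a).2.2 v hv u hu)
        (fun x => ⟨iota r Xb hc.1 x, rfl, rfl⟩)
        htr' hbt' hpc hφ (fun n => rfl) (fun n => rfl) hdecP
  · rcases hend.2.2 with ⟨hfc, hPeq, hdecF⟩ | ⟨hpc, hFeq, _⟩
    · exact hardLemma (R := subRel Xb) (pa := fun a => a.1.1) (fu := fun a => a.1.2)
        (fun a b => Iff.rfl) (fun a => (hprops a).1) (fun a => (hprops a).2.1)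
        (fun a => (hprops a).2.2) (fun x => ⟨iota r Xb hc.1 x, rfl, rfl⟩)
        htr hbt hfc hφ (fun n => rfl) (fun n => rfl) hdecF
    · exact easyLemma (r := flip r) (R := flip (subRel Xb)) (pa := fun a => a.1.2)
        (fu := fun a => a.1.1) hRflip htr' hpc hφ (fun n => rfl) hFeq

end CBProof

/-- Thm. 6.6 (2): if `(P,F) ∈ X̄` is an endpoint of a chain
`ς = (xₙ)` in `X`, then `(P,F) ∈ L(ρ')` for every subsequence `ρ'` of `ρ = (i(xₙ))`;
in particular `i[X]` is topologically dense in `X̄` for the chronological topology. -/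
theorem stmt14 {X : Type*} (r : X → X → Prop) (h : IsChronSet r) (hw : WeaklyDist r)
    (Xb : Set (Set X × Set X)) (hc : IsCompletion r Xb)
    (c : ℕ → X) (hch : IsChronChain r c) (P F : Set X) (hmem : (P, F) ∈ Xb)
    (hend : IsEndpoint r c (P, F)) :
    (∀ φ : ℕ → ℕ, StrictMono φ →
      (⟨(P, F), hmem⟩ : ↥Xb) ∈
        limitOp (subRel Xb) (fun n => iota r Xb hc.1 (c (φ n)))) ∧
    @Dense (↥Xb) (chrTop (subRel Xb)) (Set.range (iota r Xb hc.1)) := by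
  refine ⟨fun φ hφ => limit_of_endpoint r h Xb hc c P F hmem hend φ hφ, ?_⟩
  letI : TopologicalSpace ↥Xb := chrTop (subRel Xb)
  intro b
  rw [mem_closure_iff]
  intro o ho hbo
  rcases hc.2.1 b.2 with ⟨x, hx⟩ | ⟨cb, hcbchain, hcbend⟩
  · exact ⟨b, hbo, x, Subtype.ext hx⟩
  · have hmemb : (b.1.1, b.1.2) ∈ Xb := b.2
    have hlim : ∀ φ : ℕ → ℕ, StrictMono φ →
        (⟨(b.1.1, b.1.2), hmemb⟩ : ↥Xb) ∈
          limitOp (subRel Xb) (fun n => iota r Xb hc.1 (cb (φ n))) :=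
      fun φ hφ => limit_of_endpoint r h Xb hc cb b.1.1 b.1.2 hmemb hcbend φ hφ
    have hbeq : (⟨(b.1.1, b.1.2), hmemb⟩ : ↥Xb) = b := rfl
    have ho' : TopologicalSpace.GenerateOpen {U : Set ↥Xb | IsChrClosed (subRel Xb) Uᶜ} o := ho
    have Claim : ∀ o' : Set ↥Xb,
        TopologicalSpace.GenerateOpen {U : Set ↥Xb | IsChrClosed (subRel Xb) Uᶜ} o' →
        b ∈ o' → {n | iota r Xb hc.1 (cb n) ∉ o'}.Finite := by
      intro o' hgen
      induction hgen with
      | basic u hu =>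
        intro hbu
        by_contra hinf
        have hinf' : {n | iota r Xb hc.1 (cb n) ∉ u}.Infinite := hinf
        have hψ : StrictMono (Nat.nth fun n => iota r Xb hc.1 (cb n) ∉ u) :=
          Nat.nth_strictMono hinf'
        have hall : ∀ n, iota r Xb hc.1 (cb (Nat.nth (fun n => iota r Xb hc.1 (cb n) ∉ u) n)) ∉ u :=
          fun n => Nat.nth_mem_of_infinite hinf' n
        exact hu (fun n => iota r Xb hc.1 (cb (Nat.nth (fun n => iota r Xb hc.1 (cb n) ∉ u) n)))
          hall (hbeq ▸ hlim _ hψ) hbu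
      | univ => intro _; simp
      | inter u v hu hv ihu ihv =>
        intro hb
        refine ((ihu hb.1).union (ihv hb.2)).subset ?_
        intro n hn
        by_cases hnu : iota r Xb hc.1 (cb n) ∈ u
        · exact Or.inr fun hv' => hn ⟨hnu, hv'⟩
        · exact Or.inl hnu
      | sUnion T hT ih =>
        rintro ⟨u, huT, hbu⟩
        refine (ih u huT hbu).subset ?_
        intro n hn hnu
        exact hn ⟨u, huT, hnu⟩
    obtain ⟨n, hn⟩ := (Claim o ho' hbo).infinite_compl.nonempty
    have hno : iota r Xb hc.1 (cb n) ∈ o := by simpa using hn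
    exact ⟨iota r Xb hc.1 (cb n), hno, cb n, rfl⟩
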